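/- For all finite subsets S, T of Fin (2M), the ℤ₂^{2M} color-algebra bracket of Clifford monomials closes: γ_S · γ_T - (-1)^{p(S,T)} · γ_T · γ_S = (1 - (-1)^{|S|·|T| + Σ_{k<M} σ_k(S)·σ_k(T)}) · γ_S · γ_T in Cl(Q). -/

import Mathlib

/-- The ordered product of Clifford generators `ι (e i)` over `i ∈ S`,
taken in increasing order of indices, with `γ_∅ = 1`. -/
noncomputable def gammaProd {R M' : Type*} [CommRing R] [AddCommGroup M'] [Module R M']
    (Q : QuadraticForm R M') {N : ℕ} (e : Fin N → M') (S : Finset (Fin N)) :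
    CliffordAlgebra Q :=
  ((S.sort (· ≤ ·)).map fun i => CliffordAlgebra.ι Q (e i)).prod

/-- The index `2k` in `Fin (2M)`. -/
def idx0 {M : ℕ} (k : Fin M) : Fin (2 * M) := ⟨2 * k.val, by omega⟩

/-- The index `2k+1` in `Fin (2M)`. -/
def idx1 {M : ℕ} (k : Fin M) : Fin (2 * M) := ⟨2 * k.val + 1, by omega⟩

/-- The integer pairing `p(S,T) = Σ_{k<M} ([2k ∈ S]·[2k+1 ∈ T] - [2k+1 ∈ S]·[2k ∈ T])`. -/
def pPair {M : ℕ} (S T : Finset (Fin (2 * M))) : ℤ :=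
  ∑ k : Fin M,
    ((if idx0 k ∈ S then (1 : ℤ) else 0) * (if idx1 k ∈ T then 1 else 0) -
      (if idx1 k ∈ S then (1 : ℤ) else 0) * (if idx0 k ∈ T then 1 else 0))

/-- The sector parity `σ_k(S) = |S ∩ {2k, 2k+1}|`. -/
def sigk {M : ℕ} (k : Fin M) (S : Finset (Fin (2 * M))) : ℕ :=
  (S ∩ {idx0 k, idx1 k}).card

/-! Orthogonal vectors have anticommuting Clifford generators, so commuting `γ_T` past `γ_S`
costs one sign for each pair `(i, j) ∈ S × T` with `i ≠ j`, i.e. `|S||T| - |S ∩ T|` signs,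
which has the parity of `|S||T| + |S ∩ T|`. What remains is the parity identity
`p(S,T) ≡ |S ∩ T| + Σ_k σ_k(S) σ_k(T) (mod 2)`, which holds pair `{2k, 2k+1}` by pair as a
polynomial identity in the four membership indicators. -/

open Finset

section Anticommuting

variable {A ι : Type*} [Ring A] {x : ι → A}

theorem mul_prod_map_of_anticomm [DecidableEq ι]
    (hx : ∀ i j, i ≠ j → x i * x j = -(x j * x i)) (j : ι) (l : List ι) :
    x j * (l.map x).prod = (-1 : ℤ) ^ l.countP (· ≠ j) • ((l.map x).prod * x j) := by
  induction l with
  | nil => simp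
  | cons a l ih =>
    rw [List.map_cons, List.prod_cons, ← mul_assoc]
    by_cases haj : a = j
    · subst haj
      rw [List.countP_cons_of_neg (by simp)]
      conv_lhs => rw [mul_assoc, ih, mul_smul_comm, ← mul_assoc]
    · rw [List.countP_cons_of_pos (by simpa using haj), hx j a (Ne.symm haj), neg_mul,
        mul_assoc, ih, pow_succ, mul_neg_one, neg_smul, mul_smul_comm, mul_assoc]

theorem prod_map_mul_prod_map_of_anticomm [DecidableEq ι]
    (hx : ∀ i j, i ≠ j → x i * x j = -(x j * x i)) (s t : List ι) :
    (s.map x).prod * (t.map x).prod =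
      (-1 : ℤ) ^ (s.map fun j => t.countP (· ≠ j)).sum •
        ((t.map x).prod * (s.map x).prod) := by
  induction s with
  | nil => simp
  | cons a s ih =>
    rw [List.map_cons, List.prod_cons, List.map_cons, List.sum_cons, mul_assoc, ih,
      mul_smul_comm, ← mul_assoc, mul_prod_map_of_anticomm hx, smul_mul_assoc, smul_smul,
      ← pow_add, add_comm, mul_assoc]

theorem sum_card_erase_add_card_inter [DecidableEq ι] (S T : Finset ι) :
    ∑ j ∈ S, #(T.erase j) + #(S ∩ T) = #S * #T := by
  have hfiber : ∀ j, #(T.erase j) + (if j ∈ T then 1 else 0) = #T := by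
    intro j
    split_ifs with hj
    · exact card_erase_add_one hj
    · rw [erase_eq_of_notMem hj, add_zero]
  rw [← filter_mem_eq_inter, card_filter, ← sum_add_distrib, sum_congr rfl fun j _ => hfiber j,
    sum_const, smul_eq_mul]

theorem prod_map_sort_mul_prod_map_sort_of_anticomm [LinearOrder ι]
    (hx : ∀ i j, i ≠ j → x i * x j = -(x j * x i)) (S T : Finset ι) :
    ((S.sort (· ≤ ·)).map x).prod * ((T.sort (· ≤ ·)).map x).prod =
      (-1 : ℤ) ^ (#S * #T + #(S ∩ T)) •
        (((T.sort (· ≤ ·)).map x).prod * ((S.sort (· ≤ ·)).map x).prod) := by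
  have hcount : ((S.sort (· ≤ ·)).map fun j => (T.sort (· ≤ ·)).countP (· ≠ j)).sum =
      ∑ j ∈ S, #(T.erase j) := by
    rw [← Multiset.sum_coe, ← Multiset.map_coe, sort_eq]
    refine sum_congr rfl fun j _ => ?_
    rw [← Multiset.coe_countP, sort_eq, Multiset.countP_eq_card_filter, ← filter_ne']
    rfl
  rw [prod_map_mul_prod_map_of_anticomm hx, hcount, ← sum_card_erase_add_card_inter,
    add_assoc, ← two_mul, pow_add, pow_mul, neg_one_sq, one_pow, mul_one]

end Anticommuting

theorem gammaProd_mul_gammaProd {R M' : Type*} [CommRing R] [AddCommGroup M'] [Module R M']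
    (Q : QuadraticForm R M') {N : ℕ} (e : Fin N → M')
    (horth : ∀ i j : Fin N, i ≠ j → QuadraticMap.polar Q (e i) (e j) = 0)
    (S T : Finset (Fin N)) :
    gammaProd Q e S * gammaProd Q e T =
      (-1 : ℤ) ^ (#S * #T + #(S ∩ T)) • (gammaProd Q e T * gammaProd Q e S) :=
  prod_map_sort_mul_prod_map_sort_of_anticomm (fun i j hij =>
    CliffordAlgebra.ι_mul_ι_comm_of_isOrtho (QuadraticMap.isOrtho_polarBilin.mp (horth i j hij)))
    S T

section Pairs

variable {M : ℕ}

theorem sum_univ_eq_sum_idx0_add_idx1 {β : Type*} [AddCommMonoid β] (f : Fin (2 * M) → β) :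
    ∑ i, f i = ∑ k, (f (idx0 k) + f (idx1 k)) := by
  rw [← (finProdFinEquiv.trans (finCongr (mul_comm M 2))).sum_comp, Fintype.sum_prod_type]
  refine sum_congr rfl fun k _ => ?_
  rw [Fin.sum_univ_two]
  congr 2 <;> ext <;> simp [idx0, idx1, add_comm]

theorem card_inter_eq_sum_idx (S T : Finset (Fin (2 * M))) :
    (#(S ∩ T) : ℤ) = ∑ k : Fin M,
      ((if idx0 k ∈ S then 1 else 0) * (if idx0 k ∈ T then 1 else 0) +
        (if idx1 k ∈ S then 1 else 0) * (if idx1 k ∈ T then 1 else 0)) := by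
  simp only [ite_zero_mul_ite_zero, mul_one, ← mem_inter]
  rw [← sum_univ_eq_sum_idx0_add_idx1 (fun i => if i ∈ S ∩ T then (1 : ℤ) else 0),
    sum_boole, filter_mem_eq_inter, univ_inter]

theorem sigk_eq_ite_add_ite (k : Fin M) (S : Finset (Fin (2 * M))) :
    (sigk k S : ℤ) = (if idx0 k ∈ S then 1 else 0) + (if idx1 k ∈ S then 1 else 0) := by
  have hne : idx0 k ≠ idx1 k := by simp [idx0, idx1, Fin.ext_iff]
  rw [sigk, inter_comm, ← filter_mem_eq_inter, card_filter, sum_pair hne]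
  push_cast
  rfl

theorem negOnePow_pPair (S T : Finset (Fin (2 * M))) :
    (pPair S T).negOnePow = ((#(S ∩ T) + ∑ k, sigk k S * sigk k T : ℕ) : ℤ).negOnePow := by
  rw [Int.negOnePow_eq_iff]
  push_cast
  simp only [card_inter_eq_sum_idx, pPair, sigk_eq_ite_add_ite, ← sum_add_distrib,
    ← sum_sub_distrib]
  refine even_sum _ fun k _ => ?_
  generalize (if idx0 k ∈ S then (1 : ℤ) else 0) = a₀,
    (if idx1 k ∈ S then (1 : ℤ) else 0) = a₁, (if idx0 k ∈ T then (1 : ℤ) else 0) = b₀,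
    (if idx1 k ∈ T then (1 : ℤ) else 0) = b₁
  exact ⟨-(a₀ * b₀ + a₁ * b₁ + a₁ * b₀), by ring⟩

end Pairs

/-- closure of the ℤ₂^{2M} color-algebra bracket of Clifford monomials:
`γ_S·γ_T - (-1)^{p(S,T)}·γ_T·γ_S = (1 - (-1)^{|S|·|T| + Σ_k σ_k(S)·σ_k(T)})·γ_S·γ_T`. -/
theorem gammaProd_color_algebra_bracket_closure {R M' : Type*} [CommRing R] [AddCommGroup M']
    [Module R M'] (Q : QuadraticForm R M') {M : ℕ} (e : Fin (2 * M) → M')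
    (horth : ∀ i j : Fin (2 * M), i ≠ j → QuadraticMap.polar Q (e i) (e j) = 0)
    (S T : Finset (Fin (2 * M))) :
    gammaProd Q e S * gammaProd Q e T -
        ((((-1 : ℤˣ) ^ pPair S T : ℤˣ) : ℤ)) • (gammaProd Q e T * gammaProd Q e S) =
      (1 - (-1 : ℤ) ^ (S.card * T.card + ∑ k : Fin M, sigk k S * sigk k T)) •
        (gammaProd Q e S * gammaProd Q e T) := by
  have hswap : gammaProd Q e T * gammaProd Q e S =
      (-1 : ℤ) ^ (#S * #T + #(S ∩ T)) • (gammaProd Q e S * gammaProd Q e T) := by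
    rw [gammaProd_mul_gammaProd Q e horth S T, smul_smul, ← mul_pow, neg_one_mul, neg_neg,
      one_pow, one_smul]
  have hsign : ((((-1 : ℤˣ) ^ pPair S T : ℤˣ) : ℤ)) * (-1) ^ (#S * #T + #(S ∩ T)) =
      (-1) ^ (#S * #T + ∑ k, sigk k S * sigk k T) := by
    rw [← Int.negOnePow_def, negOnePow_pPair, ← Int.coe_negOnePow_natCast,
      ← Int.coe_negOnePow_natCast, ← Units.val_mul, ← Int.negOnePow_add, Units.val_inj,
      Int.negOnePow_eq_iff]
    push_cast
    exact ⟨#(S ∩ T), by ring⟩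
  rw [hswap, smul_smul, hsign, sub_smul, one_smul]
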